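/- arXiv:1007.5400 — 4 statements merged into one kernel-verified Lean document; each statement's English description precedes it below -/
import Mathlib

section
/- If G is a double-critical 8-chromatic graph with minimum degree 10 and x is a vertex of G of degree 10, then the complement of the subgraph of G induced by the neighbourhood of x has maximum degree at most 3. -/
/-! In a double-critical `k`-chromatic graph every edge `uv` has at least `k - 2` common
neighbours. Indeed, take a `(k - 2)`-colouring of `G - u - v`. If some colour `i` is missing on
the common neighbourhood of `u` and `v`, then the `i`-coloured neighbours of `u` together with `v`
form an independent set; giving it a new colour and `u` the colour `i` yields a `(k - 1)`-colouring
of `G`. So for `k = 8` every neighbour `y` of `x` has at least `6` neighbours in `N(x)`, hence at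
most `10 - 1 - 6 = 3` non-neighbours there. -/

/-- A connected graph `G` with chromatic number `k` is *double-critical* if for every
edge `uv` of `G`, deleting both `u` and `v` yields a graph that is `(k-2)`-colourable. -/
def SimpleGraph.DoubleCritical {V : Type*} (G : SimpleGraph V) (k : ℕ) : Prop :=
  G.Connected ∧ G.chromaticNumber = k ∧
    ∀ u v : V, G.Adj u v →
      (G.induce ({u, v}ᶜ : Set V)).chromaticNumber ≤ (k - 2 : ℕ)

namespace SimpleGraph

variable {V : Type*} {G : SimpleGraph V}

theorem IsIndepSet.colorable_succ {s : Set V} (hs : G.IsIndepSet s) {n : ℕ}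
    (h : (G.induce sᶜ).Colorable n) : G.Colorable (n + 1) := by
  classical
  obtain ⟨c⟩ := h
  let f : V → Option (Fin n) := fun w => if hw : w ∈ s then none else some (c ⟨w, hw⟩)
  have hf : ∀ {a b}, G.Adj a b → f a ≠ f b := by
    intro a b hab
    by_cases ha : a ∈ s <;> by_cases hb : b ∈ s <;> simp only [f, ha, hb, dif_pos, dif_neg,
      not_false_eq_true, ne_eq, reduceCtorEq, Option.some.injEq]
    · exact fun _ => hs ha hb hab.ne hab
    · exact c.valid hab
  simpa using (Coloring.mk f hf).colorable

theorem colorable_succ_of_coloring_induce_compl_pair {α : Type*} [Fintype α] {u v : V}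
    (huv : G.Adj u v) (c : (G.induce ({u, v}ᶜ : Set V)).Coloring α) (i : α)
    (hi : ∀ w (hw : w ∈ ({u, v}ᶜ : Set V)), w ∈ G.commonNeighbors u v → c ⟨w, hw⟩ ≠ i) :
    G.Colorable (Fintype.card α + 1) := by
  classical
  let c' : V → α := fun w => if hw : w ∈ ({u, v}ᶜ : Set V) then c ⟨w, hw⟩ else i
  have hmem : ∀ {w}, w ≠ u → w ≠ v → w ∈ ({u, v}ᶜ : Set V) := fun hwu hwv => by
    simp [hwu, hwv]
  have hc' : ∀ {a b}, a ∈ ({u, v}ᶜ : Set V) → b ∈ ({u, v}ᶜ : Set V) → G.Adj a b →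
      c' a ≠ c' b := by
    intro a b ha hb hab
    simpa only [c', dif_pos ha, dif_pos hb] using
      c.valid (show (G.induce _).Adj ⟨a, ha⟩ ⟨b, hb⟩ from hab)
  have hcu : c' u = i := by simp [c']
  have hcv : c' v = i := by simp [c']
  let s : Set V := {w | c' w = i ∧ G.Adj u w}
  have hsv : ∀ w ∈ s, ¬ G.Adj v w := by
    rintro w ⟨hw, huw⟩ hvw
    have hw' := hmem huw.ne' hvw.ne'
    exact hi w hw' ⟨huw, hvw⟩ (by simpa only [c', dif_pos hw'] using hw)
  have hs : G.IsIndepSet s := by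
    intro a ha b hb _ hab
    by_cases hav : a = v
    · exact hsv b hb (hav ▸ hab)
    by_cases hbv : b = v
    · exact hsv a ha (hbv ▸ hab.symm)
    exact hc' (hmem ha.2.ne' hav) (hmem hb.2.ne' hbv) hab (ha.1.trans hb.1.symm)
  have hus : ∀ w, w ∉ s → G.Adj u w → c' w ≠ c' u := fun w hw huw hwi =>
    hw ⟨hwi.trans hcu, huw⟩
  have hvs : v ∈ s := ⟨hcv, huv⟩
  refine hs.colorable_succ (Coloring.mk (G := G.induce sᶜ) (fun w => c' w) ?_).colorable
  rintro ⟨a, ha⟩ ⟨b, hb⟩ hab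
  change G.Adj a b at hab
  by_cases hau : a = u
  · subst hau
    exact (hus b hb hab).symm
  by_cases hbu : b = u
  · subst hbu
    exact hus a ha hab.symm
  have hnv : ∀ w ∉ s, w ≠ v := fun w hw h => hw (h ▸ hvs)
  exact hc' (hmem hau (hnv a ha)) (hmem hbu (hnv b hb)) hab

theorem le_card_commonNeighbors_of_colorable_induce_compl_pair [Fintype V] [DecidableRel G.Adj]
    {u v : V} (huv : G.Adj u v) {n : ℕ} (hcol : (G.induce ({u, v}ᶜ : Set V)).Colorable n)
    (hG : ¬ G.Colorable (n + 1)) : n ≤ Fintype.card (G.commonNeighbors u v) := by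
  obtain ⟨c⟩ := hcol
  have hmem : ∀ w ∈ G.commonNeighbors u v, w ∈ ({u, v}ᶜ : Set V) := fun w hw => by
    simp [hw.1.ne', hw.2.ne']
  by_contra! hlt
  obtain ⟨i, hi⟩ : ∃ i : Fin n, ∀ w : G.commonNeighbors u v, c ⟨w, hmem w w.2⟩ ≠ i := by
    by_contra! hsurj
    simpa using (Fintype.card_le_of_surjective _ hsurj).trans_lt hlt
  have := colorable_succ_of_coloring_induce_compl_pair huv c i fun w _ hwN => hi ⟨w, hwN⟩
  exact hG (by simpa using this)

theorem DoubleCritical.sub_two_le_card_commonNeighbors [Fintype V] [DecidableRel G.Adj] {k : ℕ}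
    (hG : G.DoubleCritical k) {u v : V} (huv : G.Adj u v) :
    k - 2 ≤ Fintype.card (G.commonNeighbors u v) := by
  obtain ⟨-, hχ, hcrit⟩ := hG
  obtain hk | hk := Nat.lt_or_ge k 2
  · omega
  refine le_card_commonNeighbors_of_colorable_induce_compl_pair huv
    (chromaticNumber_le_iff_colorable.mp (hcrit u v huv)) fun hcol => ?_
  have := hcol.chromaticNumber_le
  rw [hχ, Nat.cast_le] at this
  omega

theorem degree_induce_neighborSet [Fintype V] [DecidableRel G.Adj] (x : V)
    (y : G.neighborSet x) :
    (G.induce (G.neighborSet x)).degree y = Fintype.card (G.commonNeighbors x y) := by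
  rw [← card_neighborSet_eq_degree]
  exact Fintype.card_congr (Equiv.subtypeSubtypeEquivSubtypeInter (G.neighborSet x) (G.Adj y))

end SimpleGraph

theorem double_critical_eight_chromatic_neighborhood_compl_maxDegree_le_three_general
    {V : Type*} [Fintype V] [DecidableEq V] (G : SimpleGraph V) [DecidableRel G.Adj]
    (hG : G.DoubleCritical 8)
    (x : V) (hx : G.degree x = 10) :
    ((G.induce (G.neighborSet x))ᶜ).maxDegree ≤ 3 := by
  refine SimpleGraph.maxDegree_le_of_forall_degree_le _ _ fun y => ?_
  have hdeg : 6 ≤ (G.induce (G.neighborSet x)).degree y :=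
    G.degree_induce_neighborSet x y ▸ hG.sub_two_le_card_commonNeighbors y.2
  have hcard : Fintype.card (G.neighborSet x) = 10 := by
    rw [G.card_neighborSet_eq_degree, hx]
  rw [SimpleGraph.degree_compl, hcard]
  omega

/-- If `G` is a double-critical 8-chromatic graph with minimum degree 10 and `x` is a
vertex of degree 10, then the complement of the neighbourhood graph of `x` has maximum
degree at most 3. -/
theorem double_critical_eight_chromatic_neighborhood_compl_maxDegree_le_three
    {V : Type*} [Fintype V] [DecidableEq V] (G : SimpleGraph V) [DecidableRel G.Adj]
    (hG : G.DoubleCritical 8) (hδ : G.minDegree = 10)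
    (x : V) (hx : G.degree x = 10) :
    ((G.induce (G.neighborSet x))ᶜ).maxDegree ≤ 3 :=
  double_critical_eight_chromatic_neighborhood_compl_maxDegree_le_three_general G hG x hx
end

section
/- Suppose G is a double-critical 8-chromatic graph with minimum degree 10 that contains a vertex x of degree 10 such that the complement of the subgraph induced by the neighbourhood of x has maximum degree at most 2. Then G contains a complete minor on 8 vertices (a K_8 minor). -/
/-- `G.HasMinor H` means `H` is a minor of `G`, witnessed by nonempty pairwise disjoint
branch sets inducing connected subgraphs, with edges of `G` between branch sets
corresponding to adjacent vertices of `H`. -/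
def SimpleGraph.HasMinor {V W : Type*} (G : SimpleGraph V) (H : SimpleGraph W) : Prop :=
  ∃ B : W → Set V,
    (∀ w, (B w).Nonempty) ∧
    (Pairwise fun w₁ w₂ => Disjoint (B w₁) (B w₂)) ∧
    (∀ w, (G.induce (B w)).Connected) ∧
    (∀ w₁ w₂, H.Adj w₁ w₂ → ∃ v₁ ∈ B w₁, ∃ v₂ ∈ B w₂, G.Adj v₁ v₂)

/-!
The branch sets are `{x}` together with a `K₇` model inside `A = N(x)`, in which every vertex
misses at most two others. Take a maximal clique `S ⊆ A`. Each vertex of `A \ S` misses some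
vertex of `S`, and each vertex of `S` misses at most two vertices, so `|A| ≤ 3|S|` and `|S| ≥ 4`.
If `|S| ≥ 7`, seven singletons of `S` suffice. Otherwise we also use `7 - |S|` disjoint edges
of `A \ S` each of which dominates `S`. In `A \ S` every vertex fails to form such an edge with at
most two others, and `A \ S` has `(7 - |S|) + 3` vertices, so the usual augmenting argument for
graphs of large minimum degree yields the edges. Any two of them are joined by an edge: a vertex
missing both ends of the other edge would also miss a vertex of `S`, so it would have three
non-neighbours.
-/

open Finset

theorem Finset.two_lt_card_filter {α : Type*} {s : Finset α} {p : α → Prop} [DecidablePred p]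
    {a b c : α} (ha : a ∈ s) (hb : b ∈ s) (hc : c ∈ s) (hab : a ≠ b) (hac : a ≠ c) (hbc : b ≠ c)
    (hpa : p a) (hpb : p b) (hpc : p c) : 2 < #{x ∈ s | p x} :=
  Finset.two_lt_card.2 ⟨a, by simp [ha, hpa], b, by simp [hb, hpb], c, by simp [hc, hpc],
    hab, hac, hbc⟩

namespace SimpleGraph

variable {V : Type*}

section CliqueModel

variable {G : SimpleGraph V}

def IsCliqueModel (G : SimpleGraph V) (parts : List (Set V)) : Prop :=
  (∀ P ∈ parts, P.Nonempty ∧ (G.induce P).Connected) ∧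
    parts.Pairwise fun P Q => Disjoint P Q ∧ ∃ a ∈ P, ∃ b ∈ Q, G.Adj a b

theorem IsCliqueModel.hasMinor_top {parts : List (Set V)} (h : G.IsCliqueModel parts) {n : ℕ}
    (hn : parts.length = n) : G.HasMinor (⊤ : SimpleGraph (Fin n)) := by
  subst hn
  have hsymm : ∀ i j, i < j → Disjoint (parts.get j) (parts.get i) ∧
      ∃ a ∈ parts.get j, ∃ b ∈ parts.get i, G.Adj a b := fun i j hij => by
    obtain ⟨hdisj, a, ha, b, hb, hab⟩ := List.pairwise_iff_get.1 h.2 i j hij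
    exact ⟨hdisj.symm, b, hb, a, ha, hab.symm⟩
  refine ⟨parts.get, fun i => (h.1 _ (parts.get_mem i)).1, fun i j hij => ?_,
    fun i => (h.1 _ (parts.get_mem i)).2, fun i j hij => ?_⟩
  · rcases lt_or_gt_of_ne hij with hlt | hlt
    exacts [(List.pairwise_iff_get.1 h.2 i j hlt).1, (hsymm j i hlt).1]
  · rcases lt_or_gt_of_ne ((top_adj i j).1 hij) with hlt | hlt
    exacts [(List.pairwise_iff_get.1 h.2 i j hlt).2, (hsymm j i hlt).2]

theorem induce_singleton_connected (a : V) : (G.induce {a}).Connected :=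
  (connected_iff _).2 ⟨Preconnected.of_subsingleton, (Set.singleton_nonempty a).to_subtype⟩

theorem IsCliqueModel.cons_singleton {parts : List (Set V)} (h : G.IsCliqueModel parts) (x : V)
    (hx : ∀ P ∈ parts, P ⊆ G.neighborSet x) : G.IsCliqueModel ({x} :: parts) := by
  refine ⟨?_, List.pairwise_cons.2 ⟨fun P hP => ?_, h.2⟩⟩
  · rintro P (_ | ⟨_, hP⟩)
    · exact ⟨Set.singleton_nonempty x, induce_singleton_connected x⟩
    · exact h.1 P hP
  · obtain ⟨b, hb⟩ := (h.1 P hP).1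
    refine ⟨Set.disjoint_singleton_left.2 fun hxP => G.irrefl (hx P hP hxP), x, rfl, b, hb,
      hx P hP hb⟩

theorem induce_pair_connected_of_eq_or_adj {a b : V} (h : a = b ∨ G.Adj a b) :
    (G.induce {a, b}).Connected := by
  rcases h with rfl | hab
  · rw [Set.pair_eq_singleton]
    exact induce_singleton_connected a
  · exact induce_pair_connected_of_adj hab

end CliqueModel

section Matching

def pairVerts (l : List (V × V)) : List V := l.flatMap fun e => [e.1, e.2]

@[simp] theorem pairVerts_nil : pairVerts ([] : List (V × V)) = [] := rfl

@[simp] theorem pairVerts_cons (e : V × V) (l : List (V × V)) :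
    pairVerts (e :: l) = e.1 :: e.2 :: pairVerts l := rfl

@[simp] theorem length_pairVerts (l : List (V × V)) : (pairVerts l).length = 2 * l.length := by
  induction l with
  | nil => rfl
  | cons e l ih => simp [ih]; ring

def IsMatchingIn (M : SimpleGraph V) (R : Finset V) (l : List (V × V)) : Prop :=
  (∀ e ∈ l, e.1 ∈ R ∧ e.2 ∈ R ∧ M.Adj e.1 e.2) ∧ (pairVerts l).Nodup

variable {M : SimpleGraph V} {R : Finset V} {l : List (V × V)} {u v : V}

theorem fst_mem_pairVerts {e : V × V} (he : e ∈ l) : e.1 ∈ pairVerts l :=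
  List.mem_flatMap.2 ⟨e, he, by simp⟩

theorem snd_mem_pairVerts {e : V × V} (he : e ∈ l) : e.2 ∈ pairVerts l :=
  List.mem_flatMap.2 ⟨e, he, by simp⟩

theorem IsMatchingIn.mem_of_mem_pairVerts (hl : M.IsMatchingIn R l) {y : V}
    (hy : y ∈ pairVerts l) : y ∈ R := by
  obtain ⟨e, he, hy⟩ := List.mem_flatMap.1 hy
  rcases List.mem_pair.1 hy with rfl | rfl
  exacts [(hl.1 e he).1, (hl.1 e he).2.1]

theorem IsMatchingIn.cons (hl : M.IsMatchingIn R l) (hu : u ∈ R) (hv : v ∈ R) (huv : M.Adj u v)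
    (hul : u ∉ pairVerts l) (hvl : v ∉ pairVerts l) : M.IsMatchingIn R ((u, v) :: l) := by
  refine ⟨?_, ?_⟩
  · rintro e (_ | ⟨_, he⟩)
    exacts [⟨hu, hv, huv⟩, hl.1 e he]
  · simp [hl.2, hul, hvl, huv.ne]

variable [DecidableEq V]

theorem IsMatchingIn.augment (hl : M.IsMatchingIn R l) {e : V × V} (he : e ∈ l) (hu : u ∈ R)
    (hv : v ∈ R) (huv : u ≠ v) (hul : u ∉ pairVerts l) (hvl : v ∉ pairVerts l)
    (hu1 : M.Adj u e.1) (hv2 : M.Adj v e.2) :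
    M.IsMatchingIn R ((u, e.1) :: (v, e.2) :: l.erase e) := by
  refine ⟨?_, ?_⟩
  · rintro f (_ | ⟨_, _ | ⟨_, hf⟩⟩)
    exacts [⟨hu, (hl.1 e he).1, hu1⟩, ⟨hv, (hl.1 e he).2.1, hv2⟩,
      hl.1 f (List.mem_of_mem_erase hf)]
  · have hperm := (List.perm_cons_erase he).flatMap_right fun e : V × V => [e.1, e.2]
    have hnd := hperm.nodup_iff.1 hl.2
    rw [pairVerts, hperm.mem_iff] at hul hvl
    simp only [pairVerts_cons, List.nodup_cons, List.mem_cons, List.flatMap_cons,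
      List.cons_append, List.nil_append] at hnd hul hvl ⊢
    unfold pairVerts
    grind

theorem length_le_card_filter_mem_pairVerts {N : Finset V} (hl : (pairVerts l).Nodup)
    (hN : ∀ e ∈ l, e.1 ∈ N ∨ e.2 ∈ N) : l.length ≤ #{y ∈ N | y ∈ pairVerts l} := by
  induction l with
  | nil => simp
  | cons e l ih =>
    simp only [pairVerts_cons, List.nodup_cons, List.mem_cons, not_or] at hl
    obtain ⟨y, hyN, hye, hyl⟩ : ∃ y ∈ N, (y = e.1 ∨ y = e.2) ∧ y ∉ pairVerts l := by
      rcases hN e List.mem_cons_self with h | h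
      exacts [⟨e.1, h, Or.inl rfl, hl.1.2⟩, ⟨e.2, h, Or.inr rfl, hl.2.1⟩]
    have hsub : insert y {y ∈ N | y ∈ pairVerts l} ⊆ {y ∈ N | y ∈ pairVerts (e :: l)} := by
      intro z hz
      simp only [mem_insert, mem_filter, pairVerts_cons, List.mem_cons] at hz ⊢
      rcases hz with rfl | ⟨hzN, hzl⟩
      exacts [⟨hyN, by tauto⟩, ⟨hzN, by tauto⟩]
    have := card_le_card hsub
    rw [card_insert_of_notMem (by simp [hyl])] at this
    rw [List.length_cons]
    have := ih hl.2.2 fun f hf => hN f (List.mem_cons_of_mem e hf)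
    omega

theorem IsMatchingIn.card_filter_notMem_add_two_mul_length (hl : M.IsMatchingIn R l) :
    #{y ∈ R | y ∉ pairVerts l} + 2 * l.length = #R := by
  have hcov : {y ∈ R | y ∈ pairVerts l} = (pairVerts l).toFinset := by
    ext y
    simpa using hl.mem_of_mem_pairVerts
  rw [← length_pairVerts, ← List.toFinset_card_of_nodup hl.2, ← hcov, add_comm]
  exact card_filter_add_card_filter_not _

variable [DecidableRel M.Adj]

-- The non-neighbours of `u` include the other uncovered vertices, so they cannot meet every edge.
theorem IsMatchingIn.exists_mem_adj_fst_adj_snd (hl : M.IsMatchingIn R l)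
    (hR : #{y ∈ R | Mᶜ.Adj u y} ≤ 2) (hu : u ∈ R) (hul : u ∉ pairVerts l)
    (hU : ∀ y ∈ R, y ∉ pairVerts l → ¬M.Adj u y)
    (hcard : 4 ≤ #{y ∈ R | y ∉ pairVerts l} + l.length) :
    ∃ e ∈ l, M.Adj u e.1 ∧ M.Adj u e.2 := by
  by_contra! hall
  set N := {y ∈ R | Mᶜ.Adj u y}
  have hne {y : V} (hy : y ∈ pairVerts l) : u ≠ y := fun h => hul (h ▸ hy)
  have hmeet : ∀ e ∈ l, e.1 ∈ N ∨ e.2 ∈ N := fun e he => by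
    have h1 := fst_mem_pairVerts he
    have h2 := snd_mem_pairVerts he
    simp only [N, mem_filter, compl_adj, hl.mem_of_mem_pairVerts h1, hl.mem_of_mem_pairVerts h2,
      hne h1, hne h2, ne_eq, not_false_eq_true, true_and]
    tauto
  have hunc : {y ∈ R | y ∉ pairVerts l}.erase u ⊆ {y ∈ N | y ∉ pairVerts l} := fun y hy => by
    obtain ⟨hyu, hyR, hyl⟩ : y ≠ u ∧ y ∈ R ∧ y ∉ pairVerts l := by simpa using hy
    simp only [N, mem_filter, compl_adj]
    exact ⟨⟨hyR, hyu.symm, hU y hyR hyl⟩, hyl⟩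
  have := card_le_card hunc
  rw [card_erase_of_mem (mem_filter.2 ⟨hu, hul⟩)] at this
  have := length_le_card_filter_mem_pairVerts hl.2 hmeet
  have := card_filter_add_card_filter_not (s := N) (· ∈ pairVerts l)
  omega

theorem exists_isMatchingIn (hR : ∀ v ∈ R, #{u ∈ R | Mᶜ.Adj v u} ≤ 2) :
    ∀ p, 2 * p ≤ #R → p + 3 ≤ #R → ∃ l, l.length = p ∧ M.IsMatchingIn R l
  | 0, _, _ => ⟨[], rfl, by simp [IsMatchingIn]⟩
  | p + 1, h2p, hp3 => by
    obtain ⟨l, rfl, hl⟩ := exists_isMatchingIn hR p (by omega) (by omega)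
    set U := {y ∈ R | y ∉ pairVerts l}
    have hU : #U + 2 * l.length = #R := hl.card_filter_notMem_add_two_mul_length
    have memU {y : V} : y ∈ U ↔ y ∈ R ∧ y ∉ pairVerts l := mem_filter
    by_cases hadj : ∃ a ∈ U, ∃ b ∈ U, M.Adj a b
    · obtain ⟨a, ha, b, hb, hab⟩ := hadj
      exact ⟨(a, b) :: l, rfl, hl.cons (memU.1 ha).1 (memU.1 hb).1 hab (memU.1 ha).2 (memU.1 hb).2⟩
    -- Otherwise an edge `ab` of `l` is replaced by `ua` and `vb` for two uncovered `u`, `v`.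
    push Not at hadj
    obtain ⟨u, hu, v, hv, huv⟩ := one_lt_card.1 (by omega : 1 < #U)
    rw [memU] at hu hv
    obtain ⟨e, he, hu1, hu2⟩ := hl.exists_mem_adj_fst_adj_snd (hR u hu.1) hu.1 hu.2
      (fun y hy hyl => hadj u (memU.2 hu) y (memU.2 ⟨hy, hyl⟩)) (show 4 ≤ #U + l.length by omega)
    have hne {y : V} (hy : y ∈ pairVerts l) : u ≠ y := fun h => hu.2 (h ▸ hy)
    have he1 := fst_mem_pairVerts he
    have he2 := snd_mem_pairVerts he
    have hve : M.Adj v e.1 ∨ M.Adj v e.2 := by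
      by_contra! h
      have hvu : Mᶜ.Adj v u := (compl_adj M v u).2 ⟨huv.symm, hadj v (memU.2 hv) u (memU.2 hu)⟩
      refine (hR v hv.1).not_gt (two_lt_card_filter hu.1 (hl.mem_of_mem_pairVerts he1)
        (hl.mem_of_mem_pairVerts he2) (hne he1) (hne he2) (hl.1 e he).2.2.ne hvu ?_ ?_)
      · exact (compl_adj M v _).2 ⟨fun h' => hv.2 (h' ▸ he1), h.1⟩
      · exact (compl_adj M v _).2 ⟨fun h' => hv.2 (h' ▸ he2), h.2⟩
    have hlen (a b c d : V) : ((a, b) :: (c, d) :: l.erase e).length = l.length + 1 := by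
      rw [List.length_cons, List.length_cons, List.length_erase_of_mem he]
      have := List.length_pos_of_mem he
      omega
    rcases hve with hv1 | hv2
    · exact ⟨_, hlen .., hl.augment he hv.1 hu.1 huv.symm hv.2 hu.2 hv1 hu2⟩
    · exact ⟨_, hlen .., hl.augment he hu.1 hv.1 huv hu.2 hv.2 hu1 hv2⟩

end Matching

section CliqueModelInNeighbourhood

variable [DecidableEq V] {G : SimpleGraph V} [DecidableRel G.Adj] {A S : Finset V}

theorem card_filter_compl_adj_le_maxDegree_compl_induce (s : Set V) [Fintype s]
    {v : V} (hv : v ∈ s) : #{u ∈ s.toFinset | Gᶜ.Adj v u} ≤ (G.induce s)ᶜ.maxDegree := by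
  refine le_of_eq_of_le ?_ ((G.induce s)ᶜ.degree_le_maxDegree ⟨v, hv⟩)
  rw [← card_neighborFinset_eq_degree, ← card_map (Function.Embedding.subtype _)]
  congr 1
  ext u
  simp
  tauto
theorem exists_maximal_isClique_subset (A : Finset V) :
    ∃ S ⊆ A, G.IsClique (S : Set V) ∧ ∀ a ∈ A \ S, ∃ s ∈ S, Gᶜ.Adj s a := by
  classical
  obtain ⟨S, hS⟩ :=
    exists_maximal (s := A.powerset.filter fun T : Finset V => G.IsClique (T : Set V)) ⟨∅, by simp⟩
  obtain ⟨hSA, hclique⟩ : S ⊆ A ∧ G.IsClique (S : Set V) := by simpa using hS.1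
  refine ⟨S, hSA, hclique, fun a ha => ?_⟩
  obtain ⟨haA, haS⟩ := mem_sdiff.1 ha
  by_contra! h
  have hins : insert a S ∈ A.powerset.filter fun T : Finset V => G.IsClique (T : Set V) := by
    simp only [mem_filter, mem_powerset, coe_insert]
    refine ⟨insert_subset haA hSA, hclique.insert fun b hb hab => ?_⟩
    have := h b hb
    rw [compl_adj, not_and_not_right] at this
    exact (this (Ne.symm hab)).symm
  exact haS (hS.2 hins (subset_insert a S) (mem_insert_self a S))

def dominatingEdges (G : SimpleGraph V) (S : Finset V) : SimpleGraph V where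
  Adj u v := G.Adj u v ∧ ∀ s ∈ S, G.Adj s u ∨ G.Adj s v
  symm := ⟨fun _ _ h => ⟨h.1.symm, fun s hs => (h.2 s hs).symm⟩⟩
  loopless := ⟨fun _ h => G.irrefl h.1⟩

instance (S : Finset V) : DecidableRel (G.dominatingEdges S).Adj :=
  fun u v => inferInstanceAs (Decidable (G.Adj u v ∧ ∀ s ∈ S, G.Adj s u ∨ G.Adj s v))

theorem card_le_three_mul_card (hA : ∀ v ∈ A, #{u ∈ A | Gᶜ.Adj v u} ≤ 2) (hSA : S ⊆ A)
    (hmax : ∀ a ∈ A \ S, ∃ s ∈ S, Gᶜ.Adj s a) : #A ≤ 3 * #S := by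
  have hcover : A ⊆ S ∪ S.biUnion fun s => {u ∈ A | Gᶜ.Adj s u} := fun a ha => by
    by_cases haS : a ∈ S
    · exact mem_union_left _ haS
    · obtain ⟨s, hs, hsa⟩ := hmax a (mem_sdiff.2 ⟨ha, haS⟩)
      exact mem_union_right _ (mem_biUnion.2 ⟨s, hs, mem_filter.2 ⟨ha, hsa⟩⟩)
  calc #A ≤ #S + #(S.biUnion fun s => {u ∈ A | Gᶜ.Adj s u}) :=
        (card_le_card hcover).trans (card_union_le _ _)
    _ ≤ #S + #S * 2 := by grw [card_biUnion_le_card_mul _ _ 2 fun s hs => hA s (hSA hs)]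
    _ = 3 * #S := by ring

theorem adj_or_adj_of_mem_sdiff (hA : ∀ v ∈ A, #{u ∈ A | Gᶜ.Adj v u} ≤ 2) (hSA : S ⊆ A)
    (hmax : ∀ a ∈ A \ S, ∃ s ∈ S, Gᶜ.Adj s a) {a b c : V} (ha : a ∈ A \ S) (hb : b ∈ A \ S)
    (hc : c ∈ A \ S) (hab : a ≠ b) (hac : a ≠ c) (hbc : b ≠ c) : G.Adj a b ∨ G.Adj a c := by
  by_contra! h
  obtain ⟨s, hs, hsa⟩ := hmax a ha
  have hsb : s ≠ b := fun h => (mem_sdiff.1 hb).2 (h ▸ hs)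
  have hsc : s ≠ c := fun h => (mem_sdiff.1 hc).2 (h ▸ hs)
  exact (hA a (mem_sdiff.1 ha).1).not_gt <| two_lt_card_filter (mem_sdiff.1 hb).1
    (mem_sdiff.1 hc).1 (hSA hs) hbc hsb.symm hsc.symm ⟨hab, h.1⟩ ⟨hac, h.2⟩ hsa.symm

theorem card_filter_compl_dominatingEdges_le (hA : ∀ v ∈ A, #{u ∈ A | Gᶜ.Adj v u} ≤ 2)
    (hSA : S ⊆ A) {u : V} (hu : u ∈ A \ S) :
    #{v ∈ A \ S | (G.dominatingEdges S)ᶜ.Adj u v} ≤ 2 := by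
  classical
  obtain ⟨huA, huS⟩ := mem_sdiff.1 hu
  have hne {v : V} (hv : v ∉ S) {s : V} (hs : s ∈ S) : s ≠ v := fun h => hv (h ▸ hs)
  -- A non-dominating partner `v` of `u` is charged to `v` itself if `uv` is a non-edge, and
  -- otherwise to a common non-neighbour in `S`; a vertex of `S` is charged at most once since it
  -- has at most two non-neighbours.
  let f : V → V := fun v => if h : ∃ s ∈ S, ¬G.Adj s u ∧ ¬G.Adj s v then h.choose else v
  refine (card_le_card_of_injOn f (fun v hv => ?_) fun v₁ hv₁ v₂ hv₂ heq => ?_).trans (hA u huA)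
  · obtain ⟨hv, huv, hnot⟩ := by simpa [dominatingEdges] using hv
    simp only [coe_filter, Set.mem_ofPred_eq, f]
    split_ifs with h
    · obtain ⟨hs, hsu, -⟩ := h.choose_spec
      exact ⟨hSA hs, (hne huS hs).symm, fun h' => hsu h'.symm⟩
    · push Not at h
      refine ⟨hv.1, huv, fun h' => ?_⟩
      obtain ⟨s, hs, hsu, hsv⟩ := hnot h'
      exact hsv (h s hs hsu)
  · obtain ⟨hv₁, huv₁, -⟩ := by simpa [dominatingEdges] using hv₁
    obtain ⟨hv₂, huv₂, -⟩ := by simpa [dominatingEdges] using hv₂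
    simp only [f] at heq
    split_ifs at heq with h₁ h₂ h₂
    · obtain ⟨hs, hsu, hsv₁⟩ := h₁.choose_spec
      obtain ⟨-, -, hsv₂⟩ := h₂.choose_spec
      rw [← heq] at hsv₂
      by_contra hv₁₂
      exact (hA _ (hSA hs)).not_gt <| two_lt_card_filter huA hv₁.1
        hv₂.1 huv₁ huv₂ hv₁₂ ⟨hne huS hs, hsu⟩ ⟨hne hv₁.2 hs, hsv₁⟩
        ⟨hne hv₂.2 hs, hsv₂⟩
    · exact absurd heq (hne hv₂.2 h₁.choose_spec.1)
    · exact absurd heq.symm (hne hv₁.2 h₂.choose_spec.1)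
    · exact heq

theorem isCliqueModel_singletons_append_pairs (hA : ∀ v ∈ A, #{u ∈ A | Gᶜ.Adj v u} ≤ 2)
    (hSA : S ⊆ A) (hS : G.IsClique (S : Set V)) (hmax : ∀ a ∈ A \ S, ∃ s ∈ S, Gᶜ.Adj s a)
    {T : Finset V} (hTS : T ⊆ S) {l : List (V × V)}
    (hl : (G.dominatingEdges S).IsMatchingIn (A \ S) l) :
    G.IsCliqueModel (T.toList.map (fun s => ({s} : Set V)) ++ l.map fun e => {e.1, e.2}) := by
  have hlS {e : V × V} (he : e ∈ l) : e.1 ∉ S ∧ e.2 ∉ S :=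
    ⟨(mem_sdiff.1 (hl.1 e he).1).2, (mem_sdiff.1 (hl.1 e he).2.1).2⟩
  refine ⟨?_, List.pairwise_append.2 ⟨?_, ?_, ?_⟩⟩
  · simp only [List.mem_append, List.mem_map]
    rintro P (⟨s, -, rfl⟩ | ⟨e, he, rfl⟩)
    · exact ⟨Set.singleton_nonempty s, induce_singleton_connected s⟩
    · exact ⟨Set.insert_nonempty _ _, induce_pair_connected_of_eq_or_adj (Or.inr (hl.1 e he).2.2.1)⟩
  · refine List.pairwise_map.2 (T.nodup_toList.imp_of_mem fun ha hb hab => ?_)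
    exact ⟨Set.disjoint_singleton.2 hab, _, rfl, _, rfl,
      hS (hTS (mem_toList.1 ha)) (hTS (mem_toList.1 hb)) hab⟩
  · refine List.pairwise_map.2 ((List.nodup_flatMap.1 hl.2).2.imp_of_mem fun he hf hef => ?_)
    obtain ⟨⟨h11, h12⟩, h21, h22⟩ : (_ ≠ _ ∧ _ ≠ _) ∧ _ ≠ _ ∧ _ ≠ _ := by
      simpa [Function.onFun] using hef
    refine ⟨by simp [Set.disjoint_left]; tauto, ?_⟩
    have hf' := hl.1 _ hf
    rcases adj_or_adj_of_mem_sdiff hA hSA hmax (hl.1 _ he).1 hf'.1 hf'.2.1 h11.symm h21.symm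
      hf'.2.2.1.ne with h | h
    exacts [⟨_, by simp, _, by simp, h⟩, ⟨_, by simp, _, by simp, h⟩]
  · simp only [List.mem_map, mem_toList]
    rintro _ ⟨s, hs, rfl⟩ _ ⟨e, he, rfl⟩
    have hsS := hTS hs
    refine ⟨Set.disjoint_singleton_left.2 ?_, ?_⟩
    · rintro (h | h)
      exacts [(hlS he).1 (h ▸ hsS), (hlS he).2 (h ▸ hsS)]
    · rcases (hl.1 e he).2.2.2 s hsS with h | h
      exacts [⟨s, rfl, _, by simp, h⟩, ⟨s, rfl, _, by simp, h⟩]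

theorem exists_isCliqueModel_of_card_eq_ten (hA : ∀ v ∈ A, #{u ∈ A | Gᶜ.Adj v u} ≤ 2)
    (hA10 : #A = 10) : ∃ parts, G.IsCliqueModel parts ∧ parts.length = 7 ∧ ∀ P ∈ parts, P ⊆ A := by
  obtain ⟨S, hSA, hS, hmax⟩ := exists_maximal_isClique_subset (G := G) A
  have h4 := card_le_three_mul_card hA hSA hmax
  have hR : #(A \ S) = 10 - #S := by rw [card_sdiff_of_subset hSA, hA10]
  obtain ⟨T, l, hTS, hl, hlen⟩ : ∃ T l, T ⊆ S ∧ (G.dominatingEdges S).IsMatchingIn (A \ S) l ∧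
      #T + l.length = 7 := by
    by_cases h7 : 7 ≤ #S
    · obtain ⟨T, hTS, hT⟩ := exists_subset_card_eq h7
      exact ⟨T, [], hTS, by simp [IsMatchingIn], by simp [hT]⟩
    · obtain ⟨l, hlen, hl⟩ := exists_isMatchingIn
        (fun u hu => card_filter_compl_dominatingEdges_le hA hSA hu) (7 - #S) (by omega) (by omega)
      exact ⟨S, l, subset_rfl, hl, by omega⟩
  refine ⟨_, isCliqueModel_singletons_append_pairs hA hSA hS hmax hTS hl, by simp [hlen], ?_⟩
  simp only [List.mem_append, List.mem_map, mem_toList]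
  rintro P (⟨s, hs, rfl⟩ | ⟨e, he, rfl⟩)
  · simpa using hSA (hTS hs)
  · simpa [Set.insert_subset_iff] using
      ⟨(mem_sdiff.1 (hl.1 e he).1).1, (mem_sdiff.1 (hl.1 e he).2.1).1⟩

end CliqueModelInNeighbourhood

end SimpleGraph

theorem double_critical_eight_chromatic_neighborhood_compl_maxDegree_le_two_hasMinor_K8_general
    {V : Type*} [Fintype V] [DecidableEq V] (G : SimpleGraph V) [DecidableRel G.Adj]
    (x : V) (hx : G.degree x = 10)
    (hΔ : ((G.induce (G.neighborSet x))ᶜ).maxDegree ≤ 2) :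
    G.HasMinor (⊤ : SimpleGraph (Fin 8)) := by
  have hA : ∀ v ∈ G.neighborFinset x, #{u ∈ G.neighborFinset x | Gᶜ.Adj v u} ≤ 2 := fun v hv =>
    (SimpleGraph.card_filter_compl_adj_le_maxDegree_compl_induce (G.neighborSet x)
      ((G.mem_neighborFinset x v).1 hv)).trans hΔ
  obtain ⟨parts, hparts, hlen, hsub⟩ := SimpleGraph.exists_isCliqueModel_of_card_eq_ten hA
    (by rw [G.card_neighborFinset_eq_degree, hx])
  have hN : ∀ P ∈ parts, P ⊆ G.neighborSet x := fun P hP => by simpa using hsub P hP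
  exact (hparts.cons_singleton x hN).hasMinor_top (by simp [hlen])

/-- If `G` is a double-critical 8-chromatic graph with minimum degree 10 containing a
vertex `x` of degree 10 such that the complement of the neighbourhood graph of `x` has
maximum degree at most 2, then `G` has a `K₈` minor. -/
theorem double_critical_eight_chromatic_neighborhood_compl_maxDegree_le_two_hasMinor_K8
    {V : Type*} [Fintype V] [DecidableEq V] (G : SimpleGraph V) [DecidableRel G.Adj]
    (hG : G.DoubleCritical 8) (hδ : G.minDegree = 10)
    (x : V) (hx : G.degree x = 10)
    (hΔ : ((G.induce (G.neighborSet x))ᶜ).maxDegree ≤ 2) :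
    G.HasMinor (⊤ : SimpleGraph (Fin 8)) :=
  double_critical_eight_chromatic_neighborhood_compl_maxDegree_le_two_hasMinor_K8_general G x hx hΔ
end

section
/- Let G be a non-complete double-critical k-chromatic graph with k ≥ 6, and let xy be an edge of G such that the subgraph of G induced by A(x,y) = N(x) \ N[y] is complete. Then there is a matching in the complement of G_x that matches every vertex of A(x,y) to a vertex of B(x,y) = N(x) ∩ N(y); that is, there is an injective map f from A(x,y) into B(x,y) such that for each a in A(x,y), the vertices a and f(a) are non-adjacent in G. -/
/-- For an edge `xy`, `A(x,y) = N(x) \ N[y]` is the set of neighbours of `x` that are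
not in the closed neighbourhood of `y`. -/
def SimpleGraph.sideSet {V : Type*} (G : SimpleGraph V) (x y : V) : Set V :=
  G.neighborSet x \ insert y (G.neighborSet y)

/-- For an edge `xy`, `B(x,y) = N(x) ∩ N(y)` is the set of common neighbours. -/
def SimpleGraph.commonSet {V : Type*} (G : SimpleGraph V) (x y : V) : Set V :=
  G.neighborSet x ∩ G.neighborSet y

/-!
Colour `G - x - y` with `k - 2` colours. If some colour `i` were missing on `B(x, y)`, then
giving `x` the colour `i`, and one new colour to `y` and to the vertices of `A(x, y)`
coloured `i` (which are independent and non-adjacent to `y`), would colour `G` with `k - 1`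
colours. So every colour occurs on `B(x, y)`, and since `A(x, y)` is a clique its vertices
carry distinct colours: send each to a vertex of `B(x, y)` of the same colour.
-/

namespace SimpleGraph

variable {V α : Type*} {G : SimpleGraph V} {x y : V}

theorem sideSet_subset_compl_pair : G.sideSet x y ⊆ ({x, y}ᶜ : Set V) := by
  rintro v ⟨hxv, hv⟩ (rfl | rfl)
  exacts [G.irrefl hxv, hv (Set.mem_insert _ _)]

theorem mem_commonSet_of_adj_of_notMem_sideSet {v : V} (hxv : G.Adj x v) (hvy : v ≠ y)
    (hv : v ∉ G.sideSet x y) : v ∈ G.commonSet x y := by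
  simp_all [sideSet, commonSet]

namespace Coloring

open Classical in
noncomputable def extendToPair (C : (G.induce ({x, y}ᶜ : Set V)).Coloring α) (i : α) (v : V) :
    Option α :=
  if v = x then some i
  else if h : v ∈ ({x, y}ᶜ : Set V) then
    if v ∈ G.sideSet x y ∧ C ⟨v, h⟩ = i then none else some (C ⟨v, h⟩)
  else none

variable {C : (G.induce ({x, y}ᶜ : Set V)).Coloring α} {i : α}

open Classical in
theorem extendToPair_of_mem {v : V} (h : v ∈ ({x, y}ᶜ : Set V)) :
    C.extendToPair i v =
      if v ∈ G.sideSet x y ∧ C ⟨v, h⟩ = i then none else some (C ⟨v, h⟩) := by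
  have hvx : v ≠ x := fun hvx => h (Or.inl hvx)
  simp [extendToPair, hvx, h]

theorem extendToPair_of_notMem {v : V} (hvx : v ≠ x) (h : v ∉ ({x, y}ᶜ : Set V)) :
    C.extendToPair i v = none := by
  simp [extendToPair, hvx, h]

theorem color_eq_of_extendToPair_eq {u v : V} (hu : u ∈ ({x, y}ᶜ : Set V))
    (hv : v ∈ ({x, y}ᶜ : Set V)) (h : C.extendToPair i u = C.extendToPair i v) :
    C ⟨u, hu⟩ = C ⟨v, hv⟩ := by
  rw [extendToPair_of_mem hu, extendToPair_of_mem hv] at h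
  split_ifs at h <;> simp_all

theorem extendToPair_left : C.extendToPair i x = some i := by
  simp [extendToPair]

theorem extendToPair_ne_of_adj_left (hi : ∀ b, b.1 ∈ G.commonSet x y → C b ≠ i) {v : V}
    (hxv : G.Adj x v) : C.extendToPair i x ≠ C.extendToPair i v := by
  rw [extendToPair_left]
  intro h
  by_cases hv : v ∈ ({x, y}ᶜ : Set V)
  · rw [extendToPair_of_mem hv] at h
    split_ifs at h with hvA
    cases h
    have hvy : v ≠ y := fun hvy => hv (Or.inr hvy)
    exact hi ⟨v, hv⟩ (mem_commonSet_of_adj_of_notMem_sideSet hxv hvy fun h => hvA ⟨h, rfl⟩) rfl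
  · rw [extendToPair_of_notMem (G.ne_of_adj hxv).symm hv] at h
    cases h

theorem extendToPair_ne_of_adj_right (hyx : y ≠ x) {v : V} (hyv : G.Adj y v) :
    C.extendToPair i y ≠ C.extendToPair i v := by
  rw [extendToPair_of_notMem hyx (by simp)]
  intro h
  obtain rfl | hvx := eq_or_ne v x
  · rw [extendToPair_left] at h
    cases h
  · have hv : v ∈ ({x, y}ᶜ : Set V) := by simp [hvx, (G.ne_of_adj hyv).symm]
    rw [extendToPair_of_mem hv] at h
    split_ifs at h with hvA
    exact hvA.1.2 (Set.mem_insert_of_mem _ hyv)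

theorem extendToPair_ne_of_adj_of_notMem (hi : ∀ b, b.1 ∈ G.commonSet x y → C b ≠ i)
    {u v : V} (huv : G.Adj u v) (hu : u ∉ ({x, y}ᶜ : Set V)) :
    C.extendToPair i u ≠ C.extendToPair i v := by
  rw [Set.notMem_compl_iff, Set.mem_insert_iff, Set.mem_singleton_iff] at hu
  obtain rfl | rfl := hu
  · exact extendToPair_ne_of_adj_left hi huv
  · obtain rfl | hyx := eq_or_ne u x
    · exact extendToPair_ne_of_adj_left hi huv
    · exact extendToPair_ne_of_adj_right hyx huv

theorem extendToPair_ne_of_adj (hi : ∀ b, b.1 ∈ G.commonSet x y → C b ≠ i) {u v : V}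
    (huv : G.Adj u v) : C.extendToPair i u ≠ C.extendToPair i v := by
  by_cases hu : u ∈ ({x, y}ᶜ : Set V)
  · by_cases hv : v ∈ ({x, y}ᶜ : Set V)
    · have hadj : (G.induce ({x, y}ᶜ : Set V)).Adj ⟨u, hu⟩ ⟨v, hv⟩ := huv
      exact fun h => C.valid hadj (color_eq_of_extendToPair_eq hu hv h)
    · exact (extendToPair_ne_of_adj_of_notMem hi huv.symm hv).symm
  · exact extendToPair_ne_of_adj_of_notMem hi huv hu

theorem colorable_of_forall_color_ne [Fintype α]
    (hi : ∀ b, b.1 ∈ G.commonSet x y → C b ≠ i) : G.Colorable (Fintype.card α + 1) := by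
  simpa using (Coloring.mk (C.extendToPair i) (extendToPair_ne_of_adj hi)).colorable

theorem exists_mem_commonSet_eq [Fintype α] (hG : ¬ G.Colorable (Fintype.card α + 1))
    (C : (G.induce ({x, y}ᶜ : Set V)).Coloring α) (i : α) :
    ∃ b, b.1 ∈ G.commonSet x y ∧ C b = i := by
  by_contra! hi
  exact hG (colorable_of_forall_color_ne hi)

theorem exists_injOn_not_adj_of_isClique {W s t : Set V} (C : (G.induce W).Coloring α)
    (hsW : s ⊆ W) (hs : G.IsClique s) (ht : ∀ i, ∃ b, b.1 ∈ t ∧ C b = i) :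
    ∃ f : V → V, s.InjOn f ∧ ∀ a ∈ s, f a ∈ t ∧ ¬ G.Adj a (f a) := by
  classical
  choose b hbt hbC using ht
  let f : V → V := fun a => if h : a ∈ W then b (C ⟨a, h⟩) else a
  have hf : ∀ a (ha : a ∈ W), f a = b (C ⟨a, ha⟩) := fun a ha => dif_pos ha
  refine ⟨f, fun a₁ h₁ a₂ h₂ heq => ?_, fun a ha => ⟨?_, fun hadj => ?_⟩⟩
  · by_contra hne
    have hadj : (G.induce W).Adj ⟨a₁, hsW h₁⟩ ⟨a₂, hsW h₂⟩ := hs h₁ h₂ hne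
    refine C.valid hadj ?_
    rw [← hbC (C ⟨a₁, _⟩), ← hbC (C ⟨a₂, _⟩)]
    rw [hf a₁ (hsW h₁), hf a₂ (hsW h₂)] at heq
    rw [Subtype.ext heq]
  · rw [hf a (hsW ha)]; exact hbt _
  · rw [hf a (hsW ha)] at hadj
    have hadj' : (G.induce W).Adj ⟨a, hsW ha⟩ (b (C ⟨a, hsW ha⟩)) := hadj
    exact C.valid hadj' (hbC _).symm

end Coloring

end SimpleGraph

theorem double_critical_matching_A_to_B_in_complement_general
    {V : Type*} (G : SimpleGraph V) (k : ℕ)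
    (hG : G.DoubleCritical k)
    (x y : V) (hxy : G.Adj x y)
    (hA : ∀ a ∈ G.sideSet x y, ∀ b ∈ G.sideSet x y, a ≠ b → G.Adj a b) :
    ∃ f : V → V,
      Set.InjOn f (G.sideSet x y) ∧
      ∀ a ∈ G.sideSet x y, f a ∈ G.commonSet x y ∧ ¬ G.Adj a (f a) := by
  obtain ⟨-, hχ, hdel⟩ := hG
  obtain ⟨C⟩ : (G.induce ({x, y}ᶜ : Set V)).Colorable (k - 2) :=
    SimpleGraph.chromaticNumber_le_iff_colorable.1 (hdel x y hxy)
  have hk : ¬ G.Colorable (Fintype.card (Fin (k - 2)) + 1) := fun h => by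
    have hk_le : (k : ℕ∞) ≤ (k - 2 + 1 : ℕ) :=
      hχ ▸ Fintype.card_fin (k - 2) ▸ h.chromaticNumber_le
    have hk_ge : (2 : ℕ∞) ≤ k := hχ ▸ G.two_le_chromaticNumber_of_adj hxy
    norm_cast at hk_le hk_ge
    omega
  exact C.exists_injOn_not_adj_of_isClique SimpleGraph.sideSet_subset_compl_pair hA
    (C.exists_mem_commonSet_eq hk)

/-- If `G` is a non-complete double-critical `k`-chromatic graph with `k ≥ 6` and `xy`
is an edge such that `G[A(x,y)]` is complete, then the vertices of `A(x,y)` can be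
matched, in the complement of the neighbourhood graph of `x`, to vertices of `B(x,y)`:
there is an injection `f : A(x,y) → B(x,y)` such that `a` and `f a` are non-adjacent
in `G` for every `a ∈ A(x,y)`. -/
theorem double_critical_matching_A_to_B_in_complement
    {V : Type*} [Fintype V] (G : SimpleGraph V) (k : ℕ) (hk : 6 ≤ k)
    (hG : G.DoubleCritical k) (hnc : G ≠ ⊤)
    (x y : V) (hxy : G.Adj x y)
    (hA : ∀ a ∈ G.sideSet x y, ∀ b ∈ G.sideSet x y, a ≠ b → G.Adj a b) :
    ∃ f : V → V,
      Set.InjOn f (G.sideSet x y) ∧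
      ∀ a ∈ G.sideSet x y, f a ∈ G.commonSet x y ∧ ¬ G.Adj a (f a) :=
  double_critical_matching_A_to_B_in_complement_general G k hG x y hxy hA
end

section
/- Every double-critical 8-chromatic graph that contains a vertex of degree 9 contains, as a subgraph, the complete graph on 6 vertices with one edge removed. -/
/-- The complete graph on 6 vertices with one edge removed. -/
def K6minus : SimpleGraph (Fin 6) :=
  (⊤ : SimpleGraph (Fin 6)).deleteEdges {s((0 : Fin 6), (1 : Fin 6))}

/-!
For an edge `xy` of a double-critical 8-chromatic graph, every colour of a 6-colouring of
`G - x - y` occurs on a common neighbour of `x` and `y`: otherwise `x` gets a new colour, `y`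
the missing colour, and the neighbours of `y` of that colour join `x`, a 7-colouring. So each
vertex of the neighbourhood `N` of a degree-9 vertex `x` misses at most two other vertices of `N`,
and no three vertices `a, b, d` of `N` are pairwise non-adjacent: `b` would see every other vertex
of `N`, among them the common neighbour of `x` and `a` that carries the colour of `b` in a
6-colouring of `G - x - a`. The non-adjacency graph on `N` thus has maximum degree 2 and no
triangle, so `N` contains a 4-clique `Q`; counting non-edges between `Q` and the five other
vertices of `N` yields `z ∈ N` missing at most one vertex of `Q`, and `x`, `z`, `Q` span
`K₆⁻`.
-/

open Finset

namespace SimpleGraph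

variable {V : Type*}

section Independence

variable {H : SimpleGraph V}

theorem exists_card_filter_adj_le [DecidableRel H.Adj] {I T : Finset V} {d : ℕ}
    (hdeg : ∀ v ∈ I, #{w ∈ T | H.Adj v w} ≤ d + 1) (hlt : #I < #T) :
    ∃ z ∈ T, #{w ∈ I | H.Adj z w} ≤ d := by
  by_contra! h
  have := card_mul_le_card_mul (r := H.Adj) (m := d + 1) (n := d + 1) h fun v hv => by
    simpa only [bipartiteBelow, H.adj_comm _ v] using hdeg v hv
  have := Nat.le_of_mul_le_mul_right this d.succ_pos
  omega

theorem IsNIndepSet.insert_of_subset_sdiff [DecidableEq V] [DecidableRel H.Adj] {k : ℕ}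
    {S I : Finset V} {v : V} (hI : H.IsNIndepSet k I)
    (hIS : I ⊆ S \ insert v {w ∈ S | H.Adj v w}) : H.IsNIndepSet (k + 1) (insert v I) := by
  rw [← isNClique_compl] at hI ⊢
  refine hI.insert fun w hw => ?_
  have := hIS hw
  simp only [mem_sdiff, mem_insert, mem_filter, not_or, not_and] at this
  exact ⟨Ne.symm this.2.1, this.2.2 this.1⟩

theorem card_filter_adj_union_le_three [DecidableEq V] [DecidableRel H.Adj] {S : Finset V}
    {a b v : V} (hv : v ∈ S) (hav : H.Adj a v) (hbv : H.Adj b v)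
    (ha : #{w ∈ S | H.Adj a w} ≤ 2) (hb : #{w ∈ S | H.Adj b w} ≤ 2) :
    #({w ∈ S | H.Adj a w} ∪ {w ∈ S | H.Adj b w}) ≤ 3 := by
  have hv' : v ∈ {w ∈ S | H.Adj a w} ∩ {w ∈ S | H.Adj b w} := by simp [hv, hav, hbv]
  have := card_union_add_card_inter {w ∈ S | H.Adj a w} {w ∈ S | H.Adj b w}
  have := card_pos.mpr ⟨v, hv'⟩
  omega

theorem exists_isNIndepSet_subset_of_degree_le_two [DecidableEq V] [DecidableRel H.Adj]
    {k : ℕ} {S : Finset V}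
    (hdeg : ∀ v ∈ S, #{w ∈ S | H.Adj v w} ≤ 2)
    (htri : ∀ a ∈ S, ∀ b ∈ S, ∀ c ∈ S, H.Adj a b → H.Adj b c → ¬ H.Adj a c)
    (hk : 5 * k ≤ 2 * #S + 2) : ∃ I ⊆ S, H.IsNIndepSet k I := by
  induction k using Nat.strong_induction_on generalizing S with | _ k ih
  have ih' : ∀ m < k, ∀ T ⊆ S, 5 * m ≤ 2 * #T + 2 → ∃ I ⊆ T, H.IsNIndepSet m I :=
    fun m hm T hT hmT => ih m hm
      (fun v hv => (card_le_card (filter_subset_filter _ hT)).trans (hdeg v (hT hv)))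
      (fun a ha b hb c hc => htri a (hT ha) b (hT hb) c (hT hc)) hmT
  rcases k with _ | _ | k
  · exact ⟨∅, empty_subset _, by simp [isNIndepSet_iff]⟩
  · obtain ⟨v, hv⟩ : S.Nonempty := by rw [← card_pos]; omega
    exact ⟨{v}, by simpa, by simp [isNIndepSet_iff]⟩
  obtain ⟨v, hv⟩ : S.Nonempty := by rw [← card_pos]; omega
  by_cases hv1 : #{w ∈ S | H.Adj v w} ≤ 1
  · -- keep `v` and discard its closed neighbourhood: at most 2 vertices for 1
    set T := S \ insert v {w ∈ S | H.Adj v w}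
    have hT : #S ≤ #T + 2 := calc
      #S ≤ #T + #(insert v {w ∈ S | H.Adj v w}) := card_le_card_sdiff_add_card
      _ ≤ #T + 2 := by grw [card_insert_le]; omega
    obtain ⟨I, hIT, hI⟩ := ih' (k + 1) (by omega) T sdiff_subset (by omega)
    exact ⟨insert v I, insert_subset hv (hIT.trans sdiff_subset), hI.insert_of_subset_sdiff hIT⟩
  · -- keep two neighbours `a, b` of `v` and discard their closed neighbourhoods, which share `v`:
    -- at most 5 vertices for 2
    obtain ⟨a, ha, b, hb, hab⟩ := one_lt_card.mp (not_le.mp hv1)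
    rw [mem_filter] at ha hb
    have hnab : ¬ H.Adj a b := htri a ha.1 v hv b hb.1 ha.2.symm hb.2
    have hunion := card_filter_adj_union_le_three hv ha.2.symm hb.2.symm (hdeg a ha.1) (hdeg b hb.1)
    set T := S \ insert a (insert b ({w ∈ S | H.Adj a w} ∪ {w ∈ S | H.Adj b w}))
    have hT : #S ≤ #T + 5 := calc
      #S ≤ #T + #(insert a (insert b ({w ∈ S | H.Adj a w} ∪ {w ∈ S | H.Adj b w}))) :=
        card_le_card_sdiff_add_card
      _ ≤ #T + 5 := by grw [card_insert_le, card_insert_le]; omega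
    obtain ⟨I, hIT, hI⟩ := ih' k (by omega) T sdiff_subset (by omega)
    have hIb : I ⊆ S \ insert b {w ∈ S | H.Adj b w} :=
      hIT.trans (sdiff_subset_sdiff subset_rfl fun w => by simp only [mem_insert, mem_union]; tauto)
    have hIa : insert b I ⊆ S \ insert a {w ∈ S | H.Adj a w} := by
      refine insert_subset (by simp [hb.1, hab.symm, hnab]) (hIT.trans ?_)
      exact sdiff_subset_sdiff subset_rfl fun w => by simp only [mem_insert, mem_union]; tauto
    exact ⟨insert a (insert b I), insert_subset ha.1 (hIa.trans sdiff_subset),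
      (hI.insert_of_subset_sdiff hIb).insert_of_subset_sdiff hIa⟩

end Independence

variable {G : SimpleGraph V} {n : ℕ} {x y : V}

theorem exists_adj_adj_coloring_eq (hG : ¬ G.Colorable (n + 1)) (hxy : G.Adj x y)
    (c : (G.induce ({x, y}ᶜ : Set V)).Coloring (Fin n)) (i : Fin n) :
    ∃ z : ({x, y}ᶜ : Set V), G.Adj x z ∧ G.Adj y z ∧ c z = i := by
  classical
  by_contra! h
  refine hG ?_
  -- `none` is the extra colour, given to `x` and to the neighbours of `y` coloured `i`
  let C : V → Option (Fin n) := fun v =>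
    if hv : v ∈ ({x, y}ᶜ : Set V) then
      if G.Adj y v ∧ c ⟨v, hv⟩ = i then none else some (c ⟨v, hv⟩)
    else if v = x then none else some i
  have hC : ∀ {a b}, G.Adj a b → C a ≠ C b := by
    intro a b hab
    have hcv : ∀ (ha : a ∈ ({x, y}ᶜ : Set V)) (hb : b ∈ ({x, y}ᶜ : Set V)),
        c ⟨a, ha⟩ ≠ c ⟨b, hb⟩ := fun ha hb => c.valid (by simpa using hab)
    have := hab.ne
    have := hxy.ne
    simp only [C]
    split_ifs <;> grind [G.adj_symm]
  simpa using (Coloring.mk C hC).colorable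

namespace DoubleCritical

theorem not_colorable (hG : G.DoubleCritical (n + 2)) : ¬ G.Colorable (n + 1) := fun h => by
  have := h.chromaticNumber_le
  rw [hG.2.1] at this
  norm_cast at this
  omega

theorem colorable_induce (hG : G.DoubleCritical (n + 2)) (hxy : G.Adj x y) :
    (G.induce ({x, y}ᶜ : Set V)).Colorable n := by
  rw [← chromaticNumber_le_iff_colorable]
  simpa using hG.2.2 x y hxy

variable [Fintype V] [DecidableRel G.Adj]

theorem le_card_filter_adj (hG : G.DoubleCritical (n + 2)) (hxy : G.Adj x y) :
    n ≤ #{z ∈ G.neighborFinset x | G.Adj y z} := by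
  obtain ⟨c⟩ := hG.colorable_induce hxy
  choose z hxz hyz hcz using exists_adj_adj_coloring_eq hG.not_colorable hxy c
  have hinj : Function.Injective fun i => (z i : V) := fun i j hij => by
    rw [← hcz i, ← hcz j, Subtype.ext hij]
  calc n = #(univ.map ⟨_, hinj⟩) := by simp
    _ ≤ _ := card_le_card fun w hw => by
      obtain ⟨i, -, rfl⟩ := mem_map.mp hw
      simp [hxz i, hyz i]

variable [DecidableEq V]

theorem card_filter_compl_adj_add_le (hG : G.DoubleCritical (n + 2)) (hxy : G.Adj x y) :
    #{w ∈ G.neighborFinset x | Gᶜ.Adj y w} + n + 1 ≤ G.degree x := by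
  have hy : y ∈ {w ∈ G.neighborFinset x | ¬ G.Adj y w} := by simp [hxy]
  have hsub : {w ∈ G.neighborFinset x | Gᶜ.Adj y w} ⊆
      {w ∈ G.neighborFinset x | ¬ G.Adj y w}.erase y := fun w hw => by
    simp only [mem_filter, compl_adj, mem_erase] at hw ⊢
    exact ⟨hw.2.1.symm, hw.1, hw.2.2⟩
  have := card_lt_card (hsub.trans_ssubset (erase_ssubset hy))
  have hsplit : #{w ∈ G.neighborFinset x | G.Adj y w} + #{w ∈ G.neighborFinset x | ¬ G.Adj y w}
      = G.degree x := card_filter_add_card_filter_not _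
  have := hG.le_card_filter_adj hxy
  omega

theorem not_compl_adj_of_compl_adj_of_compl_adj (hG : G.DoubleCritical (n + 2))
    (hx : G.degree x = n + 3) :
    ∀ a ∈ G.neighborFinset x, ∀ b ∈ G.neighborFinset x, ∀ d ∈ G.neighborFinset x,
      Gᶜ.Adj a b → Gᶜ.Adj b d → ¬ Gᶜ.Adj a d := by
  intro a ha b hb d hd hab hbd had
  rw [mem_neighborFinset] at ha hb hd
  have hb_nonadj : ∀ w ∈ G.neighborFinset x, Gᶜ.Adj b w → w = a ∨ w = d := by
    intro w hw hbw
    by_contra! hne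
    rw [mem_neighborFinset] at hw
    have hsub : {a, d, w} ⊆ {w ∈ G.neighborFinset x | Gᶜ.Adj b w} := by
      simp only [insert_subset_iff, singleton_subset_iff, mem_filter, mem_neighborFinset]
      exact ⟨⟨ha, hab.symm⟩, ⟨hd, hbd⟩, hw, hbw⟩
    have := card_le_card hsub
    rw [card_insert_of_notMem (by simp [had.ne, hne.1.symm]),
      card_insert_of_notMem (by simp [hne.2.symm]), card_singleton] at this
    have := hG.card_filter_compl_adj_add_le hb
    omega
  have hb' : b ∈ ({x, a}ᶜ : Set V) := by simp [hb.ne', hab.ne']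
  obtain ⟨c⟩ := hG.colorable_induce ha
  obtain ⟨⟨z, hz⟩, hxz, haz, hcz⟩ :=
    exists_adj_adj_coloring_eq hG.not_colorable ha c (c ⟨b, hb'⟩)
  have hzb : z ≠ b := by rintro rfl; exact hab.2 haz
  have hbz : G.Adj b z := by
    by_contra hbz
    rcases hb_nonadj z (by simpa using hxz) ⟨hzb.symm, hbz⟩ with rfl | rfl
    exacts [G.loopless.irrefl _ haz, had.2 haz]
  exact c.valid (by simpa using hbz) hcz.symm

end DoubleCritical

theorem exists_K6minus_embedding_of_isNClique [DecidableEq V] {Q : Finset V} {z q : V}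
    (hQ : G.IsNClique 4 Q) (hz : ∀ v ∈ Q, G.Adj z v) (hq : ∀ v ∈ Q, G.Adj q v)
    (hzq : z ≠ q) :
    ∃ f : Fin 6 ↪ V, ∀ i j : Fin 6, K6minus.Adj i j → G.Adj (f i) (f j) := by
  obtain ⟨a, b, c, d, hab, hac, had, hbc, hbd, hcd, rfl⟩ := card_eq_four.mp hQ.card_eq
  have hK : ∀ u ∈ ({a, b, c, d} : Finset V), ∀ w ∈ ({a, b, c, d} : Finset V), u ≠ w →
      G.Adj u w := fun u hu w hw => hQ.isClique (mem_coe.mpr hu) (mem_coe.mpr hw)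
  simp only [mem_insert, mem_singleton, forall_eq_or_imp, forall_eq] at hK hz hq
  have hadj : ∀ i j : Fin 6, K6minus.Adj i j →
      G.Adj (![z, q, a, b, c, d] i) (![z, q, a, b, c, d] j) := by
    intro i j hij
    simp only [K6minus, deleteEdges_adj, top_adj, Set.mem_singleton_iff] at hij
    fin_cases i <;> fin_cases j <;> simp_all [G.adj_comm]
  refine ⟨⟨![z, q, a, b, c, d], fun i j hij => ?_⟩, hadj⟩
  by_contra hne
  by_cases h01 : s(i, j) = s(0, 1)
  · rcases Sym2.eq_iff.mp h01 with ⟨rfl, rfl⟩ | ⟨rfl, rfl⟩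
    exacts [hzq hij, hzq hij.symm]
  · exact (hadj i j (by simp [K6minus, hne, h01])).ne hij

theorem exists_mem_forall_sdiff_adj_of_card_filter_compl_adj_le_one [DecidableEq V]
    [DecidableRel G.Adj] {I : Finset V} {z : V} (hI : I.Nonempty) (hz : z ∉ I)
    (h : #{w ∈ I | Gᶜ.Adj z w} ≤ 1) : ∃ q ∈ I, ∀ w ∈ I \ {q}, G.Adj z w := by
  have hadj : ∀ w ∈ I, ¬ Gᶜ.Adj z w → G.Adj z w := fun w hw hzw => by
    by_contra h'
    exact hzw ⟨fun h => hz (h ▸ hw), h'⟩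
  by_cases hq : ∃ q ∈ I, Gᶜ.Adj z q
  · obtain ⟨q, hqI, hzq⟩ := hq
    refine ⟨q, hqI, fun w hw => hadj w (mem_sdiff.mp hw).1 fun hzw => ?_⟩
    have := card_le_one.mp h w (mem_filter.mpr ⟨(mem_sdiff.mp hw).1, hzw⟩) q
      (mem_filter.mpr ⟨hqI, hzq⟩)
    simp_all
  · push Not at hq
    obtain ⟨q, hqI⟩ := hI
    exact ⟨q, hqI, fun w hw => hadj w (mem_sdiff.mp hw).1 (hq w (mem_sdiff.mp hw).1)⟩

theorem exists_K6minus_embedding_of_card_filter_compl_adj_le_one [DecidableEq V]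
    [DecidableRel G.Adj] {I : Finset V} {x z : V} (hI : G.IsNClique 4 I)
    (hxI : ∀ v ∈ I, G.Adj x v) (hxz : G.Adj x z) (hzI : z ∉ I)
    (hz : #{w ∈ I | Gᶜ.Adj z w} ≤ 1) :
    ∃ f : Fin 6 ↪ V, ∀ i j : Fin 6, K6minus.Adj i j → G.Adj (f i) (f j) := by
  obtain ⟨q, hqI, hzq⟩ := exists_mem_forall_sdiff_adj_of_card_filter_compl_adj_le_one
    (card_pos.mp (by rw [hI.card_eq]; omega)) hzI hz
  refine exists_K6minus_embedding_of_isNClique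
    (hI.insert_erase (fun w hw => hxI w (mem_sdiff.mp hw).1) hqI) ?_ ?_
    (ne_of_mem_of_not_mem hqI hzI).symm
  all_goals simp only [mem_insert, mem_erase]
  · rintro v (rfl | ⟨hvq, hvI⟩)
    exacts [hxz.symm, hzq v (mem_sdiff.mpr ⟨hvI, by simpa using hvq⟩)]
  · rintro v (rfl | ⟨hvq, hvI⟩)
    exacts [(hxI q hqI).symm, hI.isClique (mem_coe.mpr hqI) (mem_coe.mpr hvI) hvq.symm]

end SimpleGraph

open SimpleGraph

/-- Every double-critical 8-chromatic graph with a vertex of degree 9 contains `K₆⁻`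
as a subgraph. -/
theorem double_critical_eight_chromatic_degree_nine_contains_K6minus_subgraph
    {V : Type*} [Fintype V] (G : SimpleGraph V) [DecidableRel G.Adj]
    (hG : G.DoubleCritical 8) (x : V) (hx : G.degree x = 9) :
    ∃ f : Fin 6 ↪ V, ∀ i j : Fin 6, K6minus.Adj i j → G.Adj (f i) (f j) := by
  classical
  have hxN : ∀ v ∈ G.neighborFinset x, G.Adj x v := fun v hv => (mem_neighborFinset _ _ _).mp hv
  have hdeg : ∀ v ∈ G.neighborFinset x, #{w ∈ G.neighborFinset x | Gᶜ.Adj v w} ≤ 2 :=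
    fun v hv => by have := hG.card_filter_compl_adj_add_le (n := 6) (hxN v hv); omega
  have hN : #(G.neighborFinset x) = 9 := hx
  obtain ⟨I, hIN, hI⟩ := exists_isNIndepSet_subset_of_degree_le_two (k := 4) hdeg
    (hG.not_compl_adj_of_compl_adj_of_compl_adj (n := 6) hx) (by omega)
  rw [isNIndepSet_compl] at hI
  obtain ⟨z, hz, hzI⟩ := exists_card_filter_adj_le (T := G.neighborFinset x \ I) (d := 1)
    (fun v hv => (card_le_card (filter_subset_filter _ sdiff_subset)).trans (hdeg v (hIN hv)))
    (by rw [card_sdiff_of_subset hIN, hN, hI.card_eq]; omega)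
  rw [mem_sdiff] at hz
  exact exists_K6minus_embedding_of_card_filter_compl_adj_le_one hI (fun v hv => hxN v (hIN hv))
    (hxN z hz.1) hz.2 hzI
end
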